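/- arXiv:2306.12351 — 4 statements merged into one kernel-verified Lean document; each statement's English description precedes it below -/
import Mathlib

section
/- For all real p with 0 ≤ p ≤ ψ, where ψ = (3-√5)/2, we have h(p) ≤ h(2p - p²). -/
/-- The binary entropy function. -/
noncomputable def binEnt (p : ℝ) : ℝ := -(p * Real.logb 2 p + (1 - p) * Real.logb 2 (1 - p))

/-!
The entropy `h` is symmetric about `1/2` and increasing on `[0, 1/2]`, so `h(x) ≤ h(y)` whenever
`x ≤ y ≤ 1 - x`. For `q = 2p - p²` the inequality `p ≤ q` holds on `[0, 1]`, and `q ≤ 1 - p` is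
`p² - 3p + 1 ≥ 0`, whose smaller root is `ψ`.
-/

namespace Real

lemma binEntropy_le_binEntropy_of_le_of_le_one_sub {x y : ℝ} (hx : 0 ≤ x) (hxy : x ≤ y)
    (hy : y ≤ 1 - x) : binEntropy x ≤ binEntropy y := by
  have hmono := binEntropy_strictMonoOn.monotoneOn
  rcases le_total y 2⁻¹ with hy₂ | hy₂
  · exact hmono ⟨hx, by linarith⟩ ⟨by linarith, hy₂⟩ hxy
  · rw [← binEntropy_one_sub y]
    exact hmono ⟨hx, by linarith⟩ ⟨by linarith, by linarith⟩ (by linarith)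

end Real

lemma binEnt_eq_binEntropy_div_log_two (p : ℝ) : binEnt p = Real.binEntropy p / Real.log 2 := by
  simp only [binEnt, Real.binEntropy, Real.logb, Real.log_inv]
  ring

lemma binEnt_le_binEnt_of_le_of_le_one_sub {x y : ℝ} (hx : 0 ≤ x) (hxy : x ≤ y)
    (hy : y ≤ 1 - x) : binEnt x ≤ binEnt y := by
  rw [binEnt_eq_binEntropy_div_log_two, binEnt_eq_binEntropy_div_log_two]
  gcongr
  exact Real.binEntropy_le_binEntropy_of_le_of_le_one_sub hx hxy hy

/-- For all `0 ≤ p ≤ ψ = (3-√5)/2`, `h(p) ≤ h(2p - p²)`. -/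
theorem stmt1 (p : ℝ) (hp0 : 0 ≤ p) (hp1 : p ≤ (3 - Real.sqrt 5) / 2) :
    binEnt p ≤ binEnt (2 * p - p ^ 2) := by
  have hsqrt : Real.sqrt 5 ^ 2 = 5 := Real.sq_sqrt (by norm_num)
  have hsqrt_ge : 2 ≤ Real.sqrt 5 := by nlinarith [Real.sqrt_nonneg 5]
  have hp_le_one : p ≤ 1 := by linarith
  have hroots : 0 ≤ ((3 - Real.sqrt 5) / 2 - p) * ((3 + Real.sqrt 5) / 2 - p) :=
    mul_nonneg (by linarith) (by linarith)
  refine binEnt_le_binEnt_of_le_of_le_one_sub hp0 ?_ ?_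
  · nlinarith
  · nlinarith
end

section
/- The family S¹²₄, consisting of all subsets S of {0,1,...,11} of size at least 4 such that either {0,1} ⊆ S, or 0 ∈ S and S ⊆ {0,2,4,6,8,10}, or 1 ∈ S and S ⊆ {1,3,5,7,9,11}, is union-closed. -/
/-!
The size condition `4 ≤ |S|` is upward closed, hence union-closed. In the other condition, a
union in which one part contains `{0, 1}` again contains it, two parts in the same one of the
two remaining branches give a union in that branch, and parts from different branches give a
union containing both `0` and `1`. An intersection of union-closed families is union-closed.
-/

/-- The even elements of `{0,…,11}`. -/
def evens12 : Finset (Fin 12) := {0, 2, 4, 6, 8, 10}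

/-- The odd elements of `{0,…,11}`. -/
def odds12 : Finset (Fin 12) := {1, 3, 5, 7, 9, 11}

/-- The family `S¹²₄` of all subsets `S` of `{0,…,11}` with `|S| ≥ 4` such that either
`{0,1} ⊆ S`, or `0 ∈ S` and `S ⊆ evens`, or `1 ∈ S` and `S ⊆ odds`. -/
def S124 : Finset (Finset (Fin 12)) :=
  Finset.univ.filter (fun S => 4 ≤ S.card ∧
    (({0, 1} : Finset (Fin 12)) ⊆ S ∨ (0 ∈ S ∧ S ⊆ evens12) ∨ (1 ∈ S ∧ S ⊆ odds12)))

namespace Finset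

theorem isUpperSet_setOf_le_card {α : Type*} (k : ℕ) : IsUpperSet {S : Finset α | k ≤ #S} :=
  fun _ _ hST hS ↦ hS.trans (card_le_card hST)

theorem supClosed_setOf_pair_subset_or_subset {α : Type*} [DecidableEq α] (a b : α)
    (E O : Finset α) :
    SupClosed {S : Finset α | {a, b} ⊆ S ∨ (a ∈ S ∧ S ⊆ E) ∨ (b ∈ S ∧ S ⊆ O)} := by
  rintro S hS T hT
  simp only [Set.mem_ofPred_eq, insert_subset_iff, singleton_subset_iff, sup_eq_union,
    mem_union, union_subset_iff] at *
  tauto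

end Finset

open Finset in
/-- The family `S¹²₄` is union-closed. -/
theorem stmt10 : ∀ A ∈ S124, ∀ B ∈ S124, A ∪ B ∈ S124 := by
  have hS124 : (S124 : Set (Finset (Fin 12))) = {S | 4 ≤ #S} ∩
      {S | {0, 1} ⊆ S ∨ (0 ∈ S ∧ S ⊆ evens12) ∨ (1 ∈ S ∧ S ⊆ odds12)} := by
    ext S
    simp [S124]
  have hsup : SupClosed (S124 : Set (Finset (Fin 12))) := hS124 ▸
    (isUpperSet_setOf_le_card 4).supClosed.inter (supClosed_setOf_pair_subset_or_subset _ _ _ _)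
  exact fun A hA B hB ↦ hsup hA hB
end

section
/- For every even integer n and every k ≥ 3 with n ≥ 10k, the family Sⁿ_k consisting of all subsets S of [n] with |S| ≥ k such that either {1,2} ⊆ S, or (2 ∈ S and S ⊆ E_n), or (1 ∈ S and S ⊆ O_n), is union-closed, where E_n and O_n are the even and odd elements of [n]. -/
/-- The even elements of `[n] = {1,…,n}`. -/
def En (n : ℕ) : Finset ℕ := (Finset.Icc 1 n).filter (fun i => i % 2 = 0)

/-- The odd elements of `[n] = {1,…,n}`. -/
def On (n : ℕ) : Finset ℕ := (Finset.Icc 1 n).filter (fun i => i % 2 = 1)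

/-- The family `Sⁿ_k` of all subsets `S ⊆ [n]` with `|S| ≥ k` such that either
`{1, 2} ⊆ S`, or `2 ∈ S` and `S ⊆ E_n`, or `1 ∈ S` and `S ⊆ O_n`. -/
def Snk (n k : ℕ) : Finset (Finset ℕ) :=
  (Finset.Icc 1 n).powerset.filter (fun S => k ≤ S.card ∧
    (({1, 2} : Finset ℕ) ⊆ S ∨ (2 ∈ S ∧ S ⊆ En n) ∨ (1 ∈ S ∧ S ⊆ On n)))

open Finset

section PairOrBranch

variable {α : Type*} [DecidableEq α] {a b : α} {E O S T : Finset α}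

def PairOrBranch (a b : α) (E O S : Finset α) : Prop :=
  {a, b} ⊆ S ∨ (b ∈ S ∧ S ⊆ E) ∨ (a ∈ S ∧ S ⊆ O)

/-- Two sets from different branches together contain the pair `{a, b}`. -/
theorem PairOrBranch.union (hS : PairOrBranch a b E O S) (hT : PairOrBranch a b E O T) :
    PairOrBranch a b E O (S ∪ T) := by
  rcases hS with hS | ⟨hbS, hSE⟩ | ⟨haS, hSO⟩
  · exact Or.inl (hS.trans subset_union_left)
  · rcases hT with hT | ⟨hbT, hTE⟩ | ⟨haT, -⟩
    · exact Or.inl (hT.trans subset_union_right)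
    · exact Or.inr (Or.inl ⟨mem_union_left _ hbS, union_subset hSE hTE⟩)
    · exact Or.inl <| insert_subset (mem_union_right _ haT)
        (singleton_subset_iff.2 (mem_union_left _ hbS))
  · rcases hT with hT | ⟨hbT, -⟩ | ⟨haT, hTO⟩
    · exact Or.inl (hT.trans subset_union_right)
    · exact Or.inl <| insert_subset (mem_union_left _ haS)
        (singleton_subset_iff.2 (mem_union_right _ hbT))
    · exact Or.inr (Or.inr ⟨mem_union_left _ haS, union_subset hSO hTO⟩)

end PairOrBranch

theorem mem_Snk {n k : ℕ} {S : Finset ℕ} :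
    S ∈ Snk n k ↔ S ⊆ Icc 1 n ∧ k ≤ #S ∧ PairOrBranch 1 2 (En n) (On n) S := by
  simp only [Snk, PairOrBranch, mem_filter, mem_powerset]

theorem stmt14_general (n k : ℕ) :
    ∀ A ∈ Snk n k, ∀ B ∈ Snk n k, A ∪ B ∈ Snk n k := by
  intro A hA B hB
  obtain ⟨hAn, hAk, hA⟩ := mem_Snk.mp hA
  obtain ⟨hBn, -, hB⟩ := mem_Snk.mp hB
  exact mem_Snk.mpr
    ⟨union_subset hAn hBn, hAk.trans (card_le_card subset_union_left), hA.union hB⟩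

/-- For every even `n` and `k ≥ 3` with `n ≥ 10k`, the family `Sⁿ_k` is union-closed. -/
theorem stmt14 (n k : ℕ) (hn : Even n) (hk : 3 ≤ k) (hnk : 10 * k ≤ n) :
    ∀ A ∈ Snk n k, ∀ B ∈ Snk n k, A ∪ B ∈ Snk n k :=
  stmt14_general n k
end

section
/- Let n be even, k ≥ 3, and suppose C(n-3, k-3) < 2·Σ_{j ≥ k-1} C(n/2 - 2, j). Then in the family Sⁿ_k, every element i with 3 ≤ i ≤ n appears in fewer than half of the sets of Sⁿ_k. -/
/-!
`Sⁿ_k` is the disjoint union of three families of the form `{R ∪ T : T ⊆ u, |T| ≥ c}`,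
for `(R, u) = ({1,2}, {3,…,n})`, `({2}, E_n ∖ {2})` and `({1}, O_n ∖ {1})`. In such a
family with `|u| = N + 1` and `i ∈ u`, the sets through `i` number `Σ_{j ≥ c-1} C(N, j)`
and those avoiding `i` number `Σ_{j ≥ c} C(N, j)`. For `i ≥ 3`, the first family thus has
`C(n-3, k-3)` more sets through `i` than avoiding it. Of the two parity families, `i` lies
in the ground set of exactly one, which gains it `C(n/2-2, k-2)`, while all sets of the
other avoid `i`. The balance is `C(n-3, k-3) - 2 Σ_{j ≥ k-1} C(n/2-2, j)`, which the
hypothesis makes negative.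
-/

open Finset

def chooseTail (N c : ℕ) : ℕ := ∑ j ∈ Icc c N, N.choose j

lemma chooseTail_eq_choose_add (N c : ℕ) :
    chooseTail N c = N.choose c + chooseTail N (c + 1) := by
  unfold chooseTail
  rcases le_or_gt c N with hc | hc
  · rw [← insert_Icc_add_one_left_eq_Icc hc, sum_insert (by simp)]
  · rw [Icc_eq_empty_of_lt hc, Icc_eq_empty_of_lt (Nat.lt_succ_of_lt hc),
      Nat.choose_eq_zero_of_lt hc, sum_empty, add_zero]

section ExtensionFamily

variable {α : Type*}

lemma card_powerset_filter_le_card (u : Finset α) (c : ℕ) :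
    #{T ∈ u.powerset | c ≤ #T} = chooseTail #u c := by
  rw [card_filter, sum_powerset_apply_card (fun m => if c ≤ m then 1 else 0), chooseTail]
  simp only [smul_eq_mul, mul_ite, mul_one, mul_zero]
  rw [← sum_filter]
  congr 1
  ext j
  simp only [mem_filter, mem_range, mem_Icc]
  omega

variable [DecidableEq α]

def extensionFamily (R u : Finset α) (c : ℕ) : Finset (Finset α) :=
  {T ∈ u.powerset | c ≤ #T}.image (R ∪ ·)

variable {R u : Finset α} {c : ℕ} {S : Finset α}

lemma mem_extensionFamily (h : Disjoint R u) :
    S ∈ extensionFamily R u c ↔ R ⊆ S ∧ S ⊆ R ∪ u ∧ #R + c ≤ #S := by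
  simp only [extensionFamily, mem_image, mem_filter, mem_powerset]
  constructor
  · rintro ⟨T, ⟨hTu, hcT⟩, rfl⟩
    refine ⟨subset_union_left, union_subset_union_right hTu, ?_⟩
    rw [card_union_of_disjoint (h.mono_right hTu)]
    omega
  · rintro ⟨hRS, hSRu, hcS⟩
    refine ⟨S \ R, ⟨?_, ?_⟩, union_sdiff_of_subset hRS⟩
    · rwa [sdiff_le_iff]
    · rw [card_sdiff_of_subset hRS]; omega

lemma card_extensionFamily (h : Disjoint R u) (c : ℕ) :
    #(extensionFamily R u c) = chooseTail #u c := by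
  rw [extensionFamily, card_image_of_injOn, card_powerset_filter_le_card]
  intro T₁ hT₁ T₂ hT₂ hT
  simp only [coe_filter, mem_powerset, Set.mem_ofPred_eq] at hT₁ hT₂
  rw [← union_sdiff_cancel_left (h.mono_right hT₁.1),
    ← union_sdiff_cancel_left (h.mono_right hT₂.1)]
  exact congrArg (· \ R) hT

variable {i : α}

lemma disjoint_insert_erase_of_disjoint (h : Disjoint R u) (i : α) :
    Disjoint (insert i R) (u.erase i) := by
  simp [disjoint_insert_left, h.mono_right (erase_subset i u)]

lemma filter_mem_extensionFamily_succ (h : Disjoint R u) (hi : i ∈ u) :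
    {S ∈ extensionFamily R u (c + 1) | i ∈ S} = extensionFamily (insert i R) (u.erase i) c := by
  have hiR : i ∉ R := disjoint_right.mp h hi
  have hunion : insert i R ∪ u.erase i = R ∪ u := by
    rw [insert_union, ← union_insert, insert_erase hi]
  ext S
  rw [mem_filter, mem_extensionFamily h,
    mem_extensionFamily (disjoint_insert_erase_of_disjoint h i), hunion, insert_subset_iff,
    card_insert_of_notMem hiR]
  constructor
  · rintro ⟨⟨hRS, hSRu, hcS⟩, hiS⟩
    exact ⟨⟨hiS, hRS⟩, hSRu, by omega⟩
  · rintro ⟨⟨hiS, hRS⟩, hSRu, hcS⟩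
    exact ⟨⟨hRS, hSRu, by omega⟩, hiS⟩

lemma filter_notMem_extensionFamily (h : Disjoint R u) (hi : i ∈ u) :
    {S ∈ extensionFamily R u c | i ∉ S} = extensionFamily R (u.erase i) c := by
  have hunion : R ∪ u.erase i = (R ∪ u).erase i := by
    rw [erase_union_distrib, erase_eq_of_notMem (disjoint_right.mp h hi)]
  ext S
  rw [mem_filter, mem_extensionFamily h, mem_extensionFamily (h.mono_right (erase_subset i u)),
    hunion, subset_erase]
  tauto

lemma filter_mem_extensionFamily_eq_empty (h : Disjoint R u) (hiR : i ∉ R) (hiu : i ∉ u) :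
    {S ∈ extensionFamily R u c | i ∈ S} = ∅ := by
  refine filter_eq_empty_iff.mpr fun S hS hiS => ?_
  have := ((mem_extensionFamily h).mp hS).2.1 hiS
  rw [mem_union] at this
  tauto

lemma card_filter_mem_extensionFamily_succ (h : Disjoint R u) (hi : i ∈ u) :
    #{S ∈ extensionFamily R u (c + 1) | i ∈ S} = chooseTail (#u - 1) c := by
  rw [filter_mem_extensionFamily_succ h hi,
    card_extensionFamily (disjoint_insert_erase_of_disjoint h i),
    card_erase_of_mem hi]

lemma card_extensionFamily_succ (h : Disjoint R u) (hi : i ∈ u) :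
    #(extensionFamily R u (c + 1)) = chooseTail (#u - 1) c + chooseTail (#u - 1) (c + 1) := by
  rw [← card_filter_add_card_filter_not (i ∈ ·), card_filter_mem_extensionFamily_succ h hi,
    filter_notMem_extensionFamily h hi, card_extensionFamily (h.mono_right (erase_subset i u)),
    card_erase_of_mem hi]

end ExtensionFamily

lemma mem_En {n x : ℕ} : x ∈ En n ↔ 1 ≤ x ∧ x ≤ n ∧ x % 2 = 0 := by
  simp [En, and_assoc]

lemma mem_On {n x : ℕ} : x ∈ On n ↔ 1 ≤ x ∧ x ≤ n ∧ x % 2 = 1 := by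
  simp [On, and_assoc]

lemma card_En (n : ℕ) : #(En n) = n / 2 := by
  rw [← Nat.Ioc_filter_dvd_card_eq_div, En]
  congr 1
  ext x
  simp only [mem_filter, mem_Icc, mem_Ioc]
  omega

lemma card_On (n : ℕ) : #(On n) = n - n / 2 := by
  have h := card_filter_add_card_filter_not (s := Icc 1 n) (· % 2 = 0)
  simp only [Nat.mod_two_ne_zero, Nat.card_Icc] at h
  rw [← card_En, En, On]
  omega

lemma card_erase_two_En {n : ℕ} (hn : 2 ≤ n) : #((En n).erase 2) = n / 2 - 1 := by
  rw [card_erase_of_mem (mem_En.mpr ⟨by norm_num, hn, rfl⟩), card_En]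

lemma card_erase_one_On {n : ℕ} (hn : Even n) (hn1 : 1 ≤ n) :
    #((On n).erase 1) = n / 2 - 1 := by
  obtain ⟨r, rfl⟩ := hn
  rw [card_erase_of_mem (mem_On.mpr ⟨le_rfl, hn1, rfl⟩), card_On]
  omega

def pairFamily (n k : ℕ) : Finset (Finset ℕ) := extensionFamily {1, 2} (Icc 3 n) (k - 2)

def evenFamily (n k : ℕ) : Finset (Finset ℕ) := extensionFamily {2} ((En n).erase 2) (k - 1)

def oddFamily (n k : ℕ) : Finset (Finset ℕ) := extensionFamily {1} ((On n).erase 1) (k - 1)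

lemma disjoint_pair_Icc (n : ℕ) : Disjoint ({1, 2} : Finset ℕ) (Icc 3 n) := by
  simp [disjoint_left]

section Families

variable {n k : ℕ} {S : Finset ℕ}

lemma Snk_eq_union (hn : 2 ≤ n) (hk : 2 ≤ k) :
    Snk n k = pairFamily n k ∪ evenFamily n k ∪ oddFamily n k := by
  have h2 : 2 ∈ En n := mem_En.mpr ⟨by norm_num, hn, rfl⟩
  have h1 : 1 ∈ On n := mem_On.mpr ⟨le_rfl, by omega, rfl⟩
  have hpair : ({1, 2} : Finset ℕ) ∪ Icc 3 n = Icc 1 n := by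
    ext x
    simp only [mem_union, mem_insert, mem_singleton, mem_Icc]
    omega
  have hE : En n ⊆ Icc 1 n := filter_subset _ _
  have hO : On n ⊆ Icc 1 n := filter_subset _ _
  ext S
  simp only [Snk, pairFamily, evenFamily, oddFamily, mem_filter, mem_powerset, mem_union,
    mem_extensionFamily (disjoint_pair_Icc n),
    mem_extensionFamily (disjoint_singleton_left.mpr (notMem_erase _ _)),
    hpair, ← insert_eq, insert_erase h1, insert_erase h2, card_singleton, singleton_subset_iff]
  rw [card_pair (by norm_num)]
  constructor
  · rintro ⟨hS, hcard, hP | ⟨hP, hSE⟩ | ⟨hP, hSO⟩⟩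
    · exact Or.inl (Or.inl ⟨hP, hS, by omega⟩)
    · exact Or.inl (Or.inr ⟨hP, hSE, by omega⟩)
    · exact Or.inr ⟨hP, hSO, by omega⟩
  · rintro ((⟨hP, hS, hcard⟩ | ⟨hP, hS, hcard⟩) | ⟨hP, hS, hcard⟩)
    · exact ⟨hS, by omega, Or.inl hP⟩
    · exact ⟨hS.trans hE, by omega, Or.inr (Or.inl ⟨hP, hS⟩)⟩
    · exact ⟨hS.trans hO, by omega, Or.inr (Or.inr ⟨hP, hS⟩)⟩

lemma one_mem_and_two_mem_of_mem_pairFamily (hS : S ∈ pairFamily n k) : 1 ∈ S ∧ 2 ∈ S := by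
  have hR := ((mem_extensionFamily (disjoint_pair_Icc n)).mp hS).1
  exact ⟨hR (by simp), hR (by simp)⟩

lemma two_mem_and_one_notMem_of_mem_evenFamily (hS : S ∈ evenFamily n k) :
    2 ∈ S ∧ 1 ∉ S := by
  obtain ⟨hR, hSu, -⟩ :=
    (mem_extensionFamily (disjoint_singleton_left.mpr (notMem_erase _ _))).mp hS
  refine ⟨hR (mem_singleton_self 2), fun h1 => ?_⟩
  simpa [mem_En] using hSu h1

lemma one_mem_and_two_notMem_of_mem_oddFamily (hS : S ∈ oddFamily n k) :
    1 ∈ S ∧ 2 ∉ S := by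
  obtain ⟨hR, hSu, -⟩ :=
    (mem_extensionFamily (disjoint_singleton_left.mpr (notMem_erase _ _))).mp hS
  refine ⟨hR (mem_singleton_self 1), fun h2 => ?_⟩
  simpa [mem_On] using hSu h2

lemma disjoint_evenFamily_oddFamily : Disjoint (evenFamily n k) (oddFamily n k) :=
  disjoint_left.mpr fun _ hE hO =>
    (one_mem_and_two_notMem_of_mem_oddFamily hO).2 (two_mem_and_one_notMem_of_mem_evenFamily hE).1

lemma disjoint_pairFamily_evenFamily_union_oddFamily :
    Disjoint (pairFamily n k) (evenFamily n k ∪ oddFamily n k) := by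
  refine disjoint_left.mpr fun S hP hEO => ?_
  obtain ⟨h1, h2⟩ := one_mem_and_two_mem_of_mem_pairFamily hP
  rcases mem_union.mp hEO with hE | hO
  · exact (two_mem_and_one_notMem_of_mem_evenFamily hE).2 h1
  · exact (one_mem_and_two_notMem_of_mem_oddFamily hO).2 h2

lemma card_pairFamily (hk : 3 ≤ k) (hn : 3 ≤ n) :
    #(pairFamily n k) = chooseTail (n - 3) (k - 3) + chooseTail (n - 3) (k - 2) := by
  rw [pairFamily, show k - 2 = k - 3 + 1 by omega,
    card_extensionFamily_succ (disjoint_pair_Icc n) (i := 3) (by simp [hn]), Nat.card_Icc,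
    show n + 1 - 3 - 1 = n - 3 by omega]

lemma card_evenFamily (hk : 2 ≤ k) (hn : 4 ≤ n) :
    #(evenFamily n k) = chooseTail (n / 2 - 2) (k - 2) + chooseTail (n / 2 - 2) (k - 1) := by
  rw [evenFamily, show k - 1 = k - 2 + 1 by omega,
    card_extensionFamily_succ (disjoint_singleton_left.mpr (notMem_erase _ _)) (i := 4)
      (by simp [mem_En, hn]), card_erase_two_En (by omega),
    show n / 2 - 1 - 1 = n / 2 - 2 by omega]

lemma card_oddFamily (hk : 2 ≤ k) (hn : Even n) (hn3 : 3 ≤ n) :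
    #(oddFamily n k) = chooseTail (n / 2 - 2) (k - 2) + chooseTail (n / 2 - 2) (k - 1) := by
  rw [oddFamily, show k - 1 = k - 2 + 1 by omega,
    card_extensionFamily_succ (disjoint_singleton_left.mpr (notMem_erase _ _)) (i := 3)
      (by simp [mem_On, hn3]), card_erase_one_On hn (by omega),
    show n / 2 - 1 - 1 = n / 2 - 2 by omega]

variable {i : ℕ}

lemma card_filter_mem_pairFamily (hk : 3 ≤ k) (hi : 3 ≤ i) (hin : i ≤ n) :
    #{S ∈ pairFamily n k | i ∈ S} = chooseTail (n - 3) (k - 3) := by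
  rw [pairFamily, show k - 2 = k - 3 + 1 by omega,
    card_filter_mem_extensionFamily_succ (disjoint_pair_Icc n) (by simp [hi, hin]), Nat.card_Icc,
    show n + 1 - 3 - 1 = n - 3 by omega]

lemma card_filter_mem_evenFamily_add_oddFamily (hk : 2 ≤ k) (hn : Even n) (hi : 3 ≤ i)
    (hin : i ≤ n) :
    #{S ∈ evenFamily n k | i ∈ S} + #{S ∈ oddFamily n k | i ∈ S} =
      chooseTail (n / 2 - 2) (k - 2) := by
  have hE := disjoint_singleton_left.mpr (notMem_erase 2 (En n))
  have hO := disjoint_singleton_left.mpr (notMem_erase 1 (On n))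
  rw [evenFamily, oddFamily, show k - 1 = k - 2 + 1 by omega]
  rcases Nat.mod_two_eq_zero_or_one i with hi2 | hi2
  · rw [card_filter_mem_extensionFamily_succ hE (by simp [mem_En]; omega),
      filter_mem_extensionFamily_eq_empty hO (by simp; omega) (by simp [mem_On]; omega),
      card_erase_two_En (by omega), card_empty, add_zero, show n / 2 - 1 - 1 = n / 2 - 2 by omega]
  · rw [card_filter_mem_extensionFamily_succ hO (by simp [mem_On]; omega),
      filter_mem_extensionFamily_eq_empty hE (by simp; omega) (by simp [mem_En]; omega),
      card_erase_one_On hn (by omega), card_empty, zero_add,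
      show n / 2 - 1 - 1 = n / 2 - 2 by omega]

lemma card_Snk (hk : 3 ≤ k) (hn : Even n) (hn4 : 4 ≤ n) :
    #(Snk n k) = chooseTail (n - 3) (k - 3) + chooseTail (n - 3) (k - 2) +
      2 * (chooseTail (n / 2 - 2) (k - 2) + chooseTail (n / 2 - 2) (k - 1)) := by
  rw [Snk_eq_union (by omega) (by omega), union_assoc,
    card_union_of_disjoint disjoint_pairFamily_evenFamily_union_oddFamily,
    card_union_of_disjoint disjoint_evenFamily_oddFamily, card_pairFamily hk (by omega),
    card_evenFamily (by omega) hn4, card_oddFamily (by omega) hn (by omega)]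
  ring

lemma card_filter_mem_Snk (hk : 3 ≤ k) (hn : Even n) (hi : 3 ≤ i) (hin : i ≤ n) :
    #{S ∈ Snk n k | i ∈ S} = chooseTail (n - 3) (k - 3) + chooseTail (n / 2 - 2) (k - 2) := by
  rw [Snk_eq_union (by omega) (by omega), union_assoc, filter_union,
    card_union_of_disjoint (disjoint_filter_filter disjoint_pairFamily_evenFamily_union_oddFamily),
    filter_union,
    card_union_of_disjoint (disjoint_filter_filter disjoint_evenFamily_oddFamily),
    card_filter_mem_pairFamily hk hi hin,
    card_filter_mem_evenFamily_add_oddFamily (by omega) hn hi hin]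

end Families

/-- If `n` is even, `k ≥ 3`, and `C(n-3, k-3) < 2·Σ_{j ≥ k-1} C(n/2-2, j)`, then every
element `i` with `3 ≤ i ≤ n` appears in fewer than half of the sets of `Sⁿ_k`. -/
theorem stmt15 (n k : ℕ) (hn : Even n) (hk : 3 ≤ k)
    (h : Nat.choose (n - 3) (k - 3)
        < 2 * ∑ j ∈ Finset.Icc (k - 1) (n / 2 - 2), Nat.choose (n / 2 - 2) j) :
    ∀ i : ℕ, 3 ≤ i → i ≤ n →
      2 * ((Snk n k).filter (fun S => i ∈ S)).card < (Snk n k).card := by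
  intro i hi hin
  have hn4 : 4 ≤ n := by
    obtain ⟨r, rfl⟩ := hn
    omega
  change _ < 2 * chooseTail (n / 2 - 2) (k - 1) at h
  rw [card_Snk hk hn hn4, card_filter_mem_Snk hk hn hi hin,
    chooseTail_eq_choose_add (n - 3) (k - 3), show k - 3 + 1 = k - 2 by omega]
  omega
end
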